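/- arXiv:1406.6039 — 2 statements merged into one kernel-verified Lean document; each statement's English description precedes it below -/
import Mathlib

section
/- Barrier computation: on ℝ² \ P with P = {(x₁,0): x₁ ≤ 0}, let U₀ = (1/√2)√(x₁+r), r = |X|, and for α ∈ (0, 1/2) set V := U₀ − U₀^{1+2α}. Then V ≥ 0 on {r ≤ 1} \ P and ΔV ≤ −c r^{α − 3/2} on {0 < r < 1, X ∉ P} for some constant c = c(α) > 0. -/
/-!
`U₀ = Re √z` for the principal branch of `√z = z ^ (1/2)` on the slit plane, so `U₀` is harmonic
and `|∇U₀|² = |(√z)'|² = 1/(4r)`. For a holomorphic `f` and a real `φ`, the one-variable chain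
rule along horizontal and vertical lines gives
`Δ(φ ∘ Re f) = φ''(Re f) |f'|² + φ'(Re f) Re(f'' + i² f'') = φ''(Re f) |f'|²`.
With `φ u = u - u^β`, `β = 1 + 2α`, this is `-β(β-1) U₀^{β-2} / (4r)`, and `U₀ ≤ |√z| = √r`
with `β - 2 < 0` bounds `U₀^{β-2}` below by `r^{β/2-1}`.
-/

/-- Laplacian of a function on `ℝ²` as the sum of the two pure second derivatives. -/
noncomputable def lap2 (f : ℝ × ℝ → ℝ) (p : ℝ × ℝ) : ℝ :=
  iteratedDeriv 2 (fun t : ℝ => f (t, p.2)) p.1 +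
  iteratedDeriv 2 (fun t : ℝ => f (p.1, t)) p.2

open Complex Filter Topology

theorem iteratedDeriv_two_comp {φ φ' g g' : ℝ → ℝ} {φ'' g'' t : ℝ}
    (hg : ∀ᶠ s in 𝓝 t, HasDerivAt g (g' s) s) (hg' : HasDerivAt g' g'' t)
    (hφ : ∀ᶠ s in 𝓝 t, HasDerivAt φ (φ' (g s)) (g s)) (hφ' : HasDerivAt φ' φ'' (g t)) :
    iteratedDeriv 2 (fun s => φ (g s)) t = φ'' * g' t ^ 2 + φ' (g t) * g'' := by
  have hderiv : deriv (fun s => φ (g s)) =ᶠ[𝓝 t] fun s => φ' (g s) * g' s := by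
    filter_upwards [hg, hφ] with s hgs hφs
    exact (hφs.comp s hgs).deriv
  rw [iteratedDeriv_succ, iteratedDeriv_one, hderiv.deriv_eq]
  exact ((hφ'.comp t hg.self_of_nhds).mul hg').deriv.trans
    (by simp only [Function.comp_apply]; ring)

theorem HasDerivAt.re_comp_ofReal_mul_add {f : ℂ → ℂ} {f' z : ℂ} (hf : HasDerivAt f f' z)
    (v c : ℂ) {t : ℝ} (ht : ↑t * v + c = z) :
    HasDerivAt (fun s : ℝ => (f (s * v + c)).re) (f' * v).re t := by
  have hline : HasDerivAt (fun w : ℂ => w * v + c) v t := by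
    simpa using ((hasDerivAt_id (t : ℂ)).mul_const v).add_const c
  exact (HasDerivAt.comp (t : ℂ) (ht ▸ hf) hline).real_of_complex

theorem iteratedDeriv_two_comp_re_line {f : ℂ → ℂ} {S : Set ℂ} (hS : IsOpen S)
    (hf : DifferentiableOn ℂ f S) {φ φ' : ℝ → ℝ} {φ'' : ℝ} (v c : ℂ) {t : ℝ}
    (ht : ↑t * v + c ∈ S) (hφ : ∀ᶠ u in 𝓝 (f (t * v + c)).re, HasDerivAt φ (φ' u) u)
    (hφ' : HasDerivAt φ' φ'' (f (t * v + c)).re) :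
    iteratedDeriv 2 (fun s : ℝ => φ (f (s * v + c)).re) t =
      φ'' * (deriv f (t * v + c) * v).re ^ 2 +
        φ' (f (t * v + c)).re * (deriv (deriv f) (t * v + c) * v ^ 2).re := by
  have hline : Continuous fun s : ℝ => (s : ℂ) * v + c := by fun_prop
  have hnear : ∀ᶠ s : ℝ in 𝓝 t, ↑s * v + c ∈ S :=
    hline.continuousAt.preimage_mem_nhds (hS.mem_nhds ht)
  have hg : ∀ᶠ s : ℝ in 𝓝 t,
      HasDerivAt (fun s : ℝ => (f (s * v + c)).re) (deriv f (s * v + c) * v).re s := by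
    filter_upwards [hnear] with s hs
    exact (hf.differentiableAt (hS.mem_nhds hs)).hasDerivAt.re_comp_ofReal_mul_add v c rfl
  have hg' : HasDerivAt (fun s : ℝ => (deriv f (s * v + c) * v).re)
      (deriv (deriv f) (t * v + c) * v ^ 2).re t := by
    have := (((hf.deriv hS).differentiableAt (hS.mem_nhds ht)).hasDerivAt.mul_const v
      ).re_comp_ofReal_mul_add v c rfl
    simpa [pow_two, mul_assoc] using this
  refine iteratedDeriv_two_comp hg hg' ?_ hφ'
  exact hg.self_of_nhds.continuousAt.tendsto.eventually hφ

theorem lap2_comp_re {f : ℂ → ℂ} {S : Set ℂ} (hS : IsOpen S) (hf : DifferentiableOn ℂ f S)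
    {φ φ' : ℝ → ℝ} {φ'' : ℝ} {p : ℝ × ℝ} (hp : (p.1 + p.2 * I : ℂ) ∈ S)
    (hφ : ∀ᶠ u in 𝓝 (f (p.1 + p.2 * I)).re, HasDerivAt φ (φ' u) u)
    (hφ' : HasDerivAt φ' φ'' (f (p.1 + p.2 * I)).re) :
    lap2 (fun q => φ (f (q.1 + q.2 * I)).re) p = φ'' * ‖deriv f (p.1 + p.2 * I)‖ ^ 2 := by
  have hx := iteratedDeriv_two_comp_re_line hS hf 1 (p.2 * I) (t := p.1)
    (by simpa using hp) (by simpa using hφ) (by simpa using hφ')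
  have hswap : ∀ s : ℝ, (s : ℂ) * I + p.1 = p.1 + s * I := fun s => add_comm _ _
  have hy := iteratedDeriv_two_comp_re_line hS hf I p.1 (t := p.2)
    (by rwa [hswap]) (by rwa [hswap]) (by rwa [hswap])
  simp only [mul_one, one_pow, hswap] at hx hy
  rw [lap2, hx, hy, Complex.sq_norm, normSq_apply]
  simp only [I_sq, mul_neg_one, neg_re, mul_re, I_re, I_im]
  ring

theorem add_mul_I_mem_slitPlane {x y : ℝ} (h : ¬(y = 0 ∧ x ≤ 0)) :
    (x + y * I : ℂ) ∈ slitPlane := by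
  rw [mem_slitPlane_iff]
  simp only [add_re, ofReal_re, mul_re, I_re, mul_zero, ofReal_im, I_im, mul_one, sub_self,
    add_zero, add_im, mul_im, zero_add]
  by_contra! hc
  exact h ⟨hc.2, hc.1⟩

theorem re_cpow_inv_two_add_mul_I (x y : ℝ) :
    ((x + y * I : ℂ) ^ (2⁻¹ : ℂ)).re = 1 / √2 * √(x + √(x ^ 2 + y ^ 2)) := by
  rw [cpow_inv_two_re, norm_add_mul_I, Real.sqrt_div' _ zero_le_two]
  simp [add_comm, div_eq_inv_mul]

theorem re_cpow_inv_two_pos {z : ℂ} (hz : z ∈ slitPlane) : 0 < (z ^ (2⁻¹ : ℂ)).re := by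
  rw [cpow_inv_two_re, Real.sqrt_pos]
  rcases mem_slitPlane_iff.1 hz with hre | him
  · positivity
  · have := abs_re_lt_norm.2 him
    have := neg_abs_le z.re
    linarith

theorem re_cpow_inv_two_le (z : ℂ) : (z ^ (2⁻¹ : ℂ)).re ≤ √‖z‖ := by
  refine (re_le_norm _).trans_eq ?_
  rw [← ofReal_ofNat, ← ofReal_inv, norm_cpow_real, Real.sqrt_eq_rpow, one_div]

theorem norm_deriv_cpow_inv_two_sq {z : ℂ} (hz : z ∈ slitPlane) :
    ‖deriv (· ^ (2⁻¹ : ℂ)) z‖ ^ 2 = (4 * ‖z‖)⁻¹ := by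
  have hz0 : 0 < ‖z‖ := norm_pos_iff.2 (slitPlane_ne_zero hz)
  rw [deriv_cpow_const hz, norm_mul, mul_pow,
    show (2⁻¹ - 1 : ℂ) = ((-2⁻¹ : ℝ) : ℂ) by push_cast; ring, norm_cpow_real,
    ← Real.rpow_mul_natCast hz0.le]
  norm_num [Real.rpow_neg_one]
  ring

theorem hasDerivAt_sub_rpow (β : ℝ) {u : ℝ} (hu : 0 < u) :
    HasDerivAt (fun u => u - u ^ β) (1 - β * u ^ (β - 1)) u :=
  (hasDerivAt_id u).sub (Real.hasDerivAt_rpow_const (Or.inl hu.ne'))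

theorem hasDerivAt_one_sub_mul_rpow (β : ℝ) {u : ℝ} (hu : 0 < u) :
    HasDerivAt (fun u => 1 - β * u ^ (β - 1)) (-(β * (β - 1)) * u ^ (β - 2)) u := by
  refine (((Real.hasDerivAt_rpow_const (p := β - 1) (Or.inl hu.ne')).const_mul β).const_sub 1
    ).congr_deriv ?_
  rw [show β - 1 - 1 = β - 2 by ring]
  ring

theorem lap2_sub_rpow_re_cpow_inv_two (β : ℝ) {p : ℝ × ℝ}
    (hp : (p.1 + p.2 * I : ℂ) ∈ slitPlane) :
    lap2 (fun q => ((q.1 + q.2 * I : ℂ) ^ (2⁻¹ : ℂ)).re - ((q.1 + q.2 * I : ℂ) ^ (2⁻¹ : ℂ)).re ^ β)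
        p =
      -(β * (β - 1)) * ((p.1 + p.2 * I : ℂ) ^ (2⁻¹ : ℂ)).re ^ (β - 2) *
        (4 * ‖(p.1 + p.2 * I : ℂ)‖)⁻¹ := by
  have hU := re_cpow_inv_two_pos hp
  have hdiff : DifferentiableOn ℂ (· ^ (2⁻¹ : ℂ)) slitPlane := fun z hz =>
    (hasStrictDerivAt_cpow_const hz).hasDerivAt.differentiableAt.differentiableWithinAt
  rw [lap2_comp_re isOpen_slitPlane hdiff hp
    ((lt_mem_nhds hU).mono fun u hu => hasDerivAt_sub_rpow β hu)
    (hasDerivAt_one_sub_mul_rpow β hU),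
    norm_deriv_cpow_inv_two_sq hp]

theorem lap2_sub_rpow_re_cpow_inv_two_le {β : ℝ} (hβ₁ : 1 ≤ β) (hβ₂ : β ≤ 2) {p : ℝ × ℝ}
    (hp : (p.1 + p.2 * I : ℂ) ∈ slitPlane) :
    lap2 (fun q => ((q.1 + q.2 * I : ℂ) ^ (2⁻¹ : ℂ)).re - ((q.1 + q.2 * I : ℂ) ^ (2⁻¹ : ℂ)).re ^ β)
        p ≤
      -(β * (β - 1) / 4) * ‖(p.1 + p.2 * I : ℂ)‖ ^ (β / 2 - 2) := by
  set z : ℂ := p.1 + p.2 * I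
  have hr : 0 < ‖z‖ := norm_pos_iff.2 (slitPlane_ne_zero hp)
  have hpow : ‖z‖ ^ ((β - 2) / 2) ≤ (z ^ (2⁻¹ : ℂ)).re ^ (β - 2) := by
    rw [Real.rpow_div_two_eq_sqrt _ hr.le]
    exact Real.rpow_le_rpow_of_nonpos (re_cpow_inv_two_pos hp) (re_cpow_inv_two_le z) (by linarith)
  have hcoeff : -(β * (β - 1)) * (4 * ‖z‖)⁻¹ ≤ 0 :=
    mul_nonpos_of_nonpos_of_nonneg (neg_nonpos.2 (by nlinarith)) (by positivity)
  calc lap2 _ p = -(β * (β - 1)) * (4 * ‖z‖)⁻¹ * (z ^ (2⁻¹ : ℂ)).re ^ (β - 2) := by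
        rw [lap2_sub_rpow_re_cpow_inv_two β hp]; ring
    _ ≤ -(β * (β - 1)) * (4 * ‖z‖)⁻¹ * ‖z‖ ^ ((β - 2) / 2) :=
        mul_le_mul_of_nonpos_left hpow hcoeff
    _ = -(β * (β - 1) / 4) * ‖z‖ ^ (β / 2 - 2) := by
        rw [show β / 2 - 2 = (β - 2) / 2 - 1 by ring, Real.rpow_sub_one hr.ne']
        field_simp

/-- barrier computation: on `ℝ²` minus the slit
`P = {(x₁,0): x₁ ≤ 0}`, with `U₀ = (1/√2)√(x₁+r)`, `r = |X|`, and `α ∈ (0,1/2)`,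
the barrier `V = U₀ − U₀^{1+2α}` satisfies `V ≥ 0` on `{r ≤ 1} \ P` and
`ΔV ≤ −c·r^{α−3/2}` on `{0 < r < 1} \ P` for some `c = c(α) > 0`. -/
theorem stmt10 (α : ℝ) (hα : α ∈ Set.Ioo (0:ℝ) (1/2)) :
    ∃ c > (0:ℝ),
      (∀ p : ℝ × ℝ, ¬(p.2 = 0 ∧ p.1 ≤ 0) → Real.sqrt (p.1 ^ 2 + p.2 ^ 2) ≤ 1 →
        0 ≤ (1 / Real.sqrt 2) * Real.sqrt (p.1 + Real.sqrt (p.1 ^ 2 + p.2 ^ 2))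
            - ((1 / Real.sqrt 2) * Real.sqrt (p.1 + Real.sqrt (p.1 ^ 2 + p.2 ^ 2))) ^ (1 + 2*α)) ∧
      (∀ p : ℝ × ℝ, ¬(p.2 = 0 ∧ p.1 ≤ 0) →
        0 < Real.sqrt (p.1 ^ 2 + p.2 ^ 2) → Real.sqrt (p.1 ^ 2 + p.2 ^ 2) < 1 →
        lap2 (fun q => (1 / Real.sqrt 2) * Real.sqrt (q.1 + Real.sqrt (q.1 ^ 2 + q.2 ^ 2))
            - ((1 / Real.sqrt 2) * Real.sqrt (q.1 + Real.sqrt (q.1 ^ 2 + q.2 ^ 2))) ^ (1 + 2*α)) p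
          ≤ -c * Real.sqrt (p.1 ^ 2 + p.2 ^ 2) ^ (α - 3/2)) := by
  obtain ⟨hα₀, hα₁⟩ := hα
  simp only [← re_cpow_inv_two_add_mul_I]
  simp only [← norm_add_mul_I]
  refine ⟨α * (1 + 2 * α) / 2, by positivity, fun p _ hr => ?_, fun p hp _ _ => ?_⟩
  · have hU₀ : 0 ≤ ((p.1 + p.2 * I : ℂ) ^ (2⁻¹ : ℂ)).re := by
      rw [re_cpow_inv_two_add_mul_I]; positivity
    have hU₁ : ((p.1 + p.2 * I : ℂ) ^ (2⁻¹ : ℂ)).re ≤ 1 :=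
      (re_cpow_inv_two_le _).trans (Real.sqrt_le_one.2 hr)
    exact sub_nonneg.2 (Real.rpow_le_self_of_le_one hU₀ hU₁ (by linarith))
  · calc _ ≤ _ := lap2_sub_rpow_re_cpow_inv_two_le (by linarith) (by linarith)
            (add_mul_I_mem_slitPlane hp)
      _ = _ := by rw [show (1 + 2 * α) / 2 - 2 = α - 3 / 2 by ring]; ring
end

section
/- Solvability of the approximating-polynomial linear system: consider the linear system in unknowns a_{μ,m} (μ ∈ ℕⁿ multi-index, m ∈ ℕ, |μ|+m ≤ k+1) given by A_{σ,l} = (l+1)(l+2+2σₙ) a_{σ,l+1} + (σₙ+1) a_{σ+ēₙ, l} + Σᵢ (σᵢ+1)(σᵢ+2) a_{σ+2ēᵢ, l−1} for all |σ|+l ≤ k (with a's indexed out of range interpreted as 0). Given arbitrary values A_{σ,l} and arbitrary values a_{μ,0} (|μ| ≤ k+1), there exists a unique choice of the remaining coefficients a_{μ,m} (m ≥ 1) solving the system. -/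
open Finset

noncomputable def solAux (n k : ℕ) (A : (Fin (n+1) → ℕ) → ℕ → ℝ)
    (b : (Fin (n+1) → ℕ) → ℝ) :
    ℕ → ((Fin (n+1) → ℕ) → ℝ) × ((Fin (n+1) → ℕ) → ℝ)
  | 0 => (0, fun μ => if (∑ i, μ i) ≤ k + 1 then b μ else 0)
  | m + 1 =>
    let p := solAux n k A b m
    (p.2, fun σ => if (∑ i, σ i) + m ≤ k then
        (A σ m - ((σ (Fin.last n) : ℝ) + 1) * p.2 (σ + Pi.single (Fin.last n) 1)
          - (if m = 0 then 0 else
              ∑ i, ((σ i : ℝ) + 1) * ((σ i : ℝ) + 2) * p.1 (σ + Pi.single i 2)))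
          / (((m : ℝ) + 1) * ((m : ℝ) + 2 + 2 * (σ (Fin.last n) : ℝ)))
      else 0)

noncomputable def sol (n k : ℕ) (A : (Fin (n+1) → ℕ) → ℕ → ℝ)
    (b : (Fin (n+1) → ℕ) → ℝ) (μ : Fin (n+1) → ℕ) (m : ℕ) : ℝ :=
  (solAux n k A b m).2 μ

lemma solAux_fst (n k : ℕ) (A : (Fin (n+1) → ℕ) → ℕ → ℝ)
    (b : (Fin (n+1) → ℕ) → ℝ) (m : ℕ) :
    (solAux n k A b (m+1)).1 = (solAux n k A b m).2 := rfl

lemma denom_ne (m : ℕ) (s : ℕ) :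
    ((m : ℝ) + 1) * ((m : ℝ) + 2 + 2 * (s : ℝ)) ≠ 0 := by
  positivity

/-- solvability of the approximating-polynomial linear system:
unknowns `a_{μ,m}` for multi-indices `μ` and `m ∈ ℕ` with `|μ|+m ≤ k+1`
(extended by `0` otherwise). Given the right-hand sides `A_{σ,l}` (`|σ|+l ≤ k`)
and the values `a_{μ,0}` (`|μ| ≤ k+1`), the system
`A_{σ,l} = (l+1)(l+2+2σₙ) a_{σ,l+1} + (σₙ+1) a_{σ+ēₙ,l} + Σᵢ (σᵢ+1)(σᵢ+2) a_{σ+2ēᵢ,l−1}`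
(the `l−1` term omitted when `l = 0`) has a unique solution. The ambient
dimension is `n+1` and `σₙ` denotes the last component. -/
theorem stmt14 (n k : ℕ)
    (A : (Fin (n+1) → ℕ) → ℕ → ℝ) (b : (Fin (n+1) → ℕ) → ℝ) :
    ∃! a : (Fin (n+1) → ℕ) → ℕ → ℝ,
      (∀ (μ : Fin (n+1) → ℕ) (m : ℕ), k + 1 < (∑ i, μ i) + m → a μ m = 0) ∧
      (∀ μ : Fin (n+1) → ℕ, (∑ i, μ i) ≤ k + 1 → a μ 0 = b μ) ∧
      (∀ (σ : Fin (n+1) → ℕ) (l : ℕ), (∑ i, σ i) + l ≤ k →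
        ((l : ℝ) + 1) * ((l : ℝ) + 2 + 2 * (σ (Fin.last n) : ℝ)) * a σ (l + 1)
          + ((σ (Fin.last n) : ℝ) + 1) * a (σ + Pi.single (Fin.last n) 1) l
          + (if l = 0 then 0 else
              ∑ i, ((σ i : ℝ) + 1) * ((σ i : ℝ) + 2) * a (σ + Pi.single i 2) (l - 1))
          = A σ l) := by
  refine ⟨sol n k A b, ⟨?_, ?_, ?_⟩, ?_⟩
  · -- vanishing
    intro μ m h
    match m with
    | 0 =>
      simp only [sol, solAux]
      rw [if_neg (by omega)]
    | l + 1 =>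
      simp only [sol, solAux]
      rw [if_neg (by omega)]
  · -- initial values
    intro μ h
    simp only [sol, solAux]
    rw [if_pos h]
  · -- equation
    intro σ l h
    have hd := denom_ne l (σ (Fin.last n))
    have hval : sol n k A b σ (l + 1) =
        (A σ l - ((σ (Fin.last n) : ℝ) + 1) *
            sol n k A b (σ + Pi.single (Fin.last n) 1) l
          - (if l = 0 then 0 else
              ∑ i, ((σ i : ℝ) + 1) * ((σ i : ℝ) + 2) *
                sol n k A b (σ + Pi.single i 2) (l - 1)))
          / (((l : ℝ) + 1) * ((l : ℝ) + 2 + 2 * (σ (Fin.last n) : ℝ))) := by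
      simp only [sol, solAux]
      rw [if_pos h]
      congr 2
      match l with
      | 0 => simp
      | l + 1 =>
        simp only [if_neg (Nat.succ_ne_zero l)]
        rfl
    rw [hval]
    field_simp
    ring
  · -- uniqueness
    intro a ⟨hz, hb, heq⟩
    have key : ∀ m μ, a μ m = sol n k A b μ m := by
      intro m
      induction m using Nat.strong_induction_on with
      | _ m ih =>
        intro μ
        match m with
        | 0 =>
          by_cases h : (∑ i, μ i) ≤ k + 1
          · rw [hb μ h]
            simp only [sol, solAux]
            rw [if_pos h]
          · rw [hz μ 0 (by omega)]
            simp only [sol, solAux]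
            rw [if_neg h]
        | l + 1 =>
          by_cases h : (∑ i, μ i) + l ≤ k
          · have e1 := heq μ l h
            have e2 : ((l : ℝ) + 1) * ((l : ℝ) + 2 + 2 * (μ (Fin.last n) : ℝ)) *
                sol n k A b μ (l + 1)
                + ((μ (Fin.last n) : ℝ) + 1) * sol n k A b (μ + Pi.single (Fin.last n) 1) l
                + (if l = 0 then 0 else
                    ∑ i, ((μ i : ℝ) + 1) * ((μ i : ℝ) + 2) *
                      sol n k A b (μ + Pi.single i 2) (l - 1))
                = A μ l := by
              have hval : sol n k A b μ (l + 1) =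
                  (A μ l - ((μ (Fin.last n) : ℝ) + 1) *
                      sol n k A b (μ + Pi.single (Fin.last n) 1) l
                    - (if l = 0 then 0 else
                        ∑ i, ((μ i : ℝ) + 1) * ((μ i : ℝ) + 2) *
                          sol n k A b (μ + Pi.single i 2) (l - 1)))
                    / (((l : ℝ) + 1) * ((l : ℝ) + 2 + 2 * (μ (Fin.last n) : ℝ))) := by
                simp only [sol, solAux]
                rw [if_pos h]
                congr 2
                match l with
                | 0 => simp
                | l + 1 =>
                  simp only [if_neg (Nat.succ_ne_zero l)]
                  rfl
              rw [hval]
              have hd := denom_ne l (μ (Fin.last n))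
              field_simp
              ring
            rw [ih l (by omega)] at e1
            have e3 : (if l = 0 then (0:ℝ) else
                ∑ i, ((μ i : ℝ) + 1) * ((μ i : ℝ) + 2) *
                  a (μ + Pi.single i 2) (l - 1)) =
                (if l = 0 then (0:ℝ) else
                ∑ i, ((μ i : ℝ) + 1) * ((μ i : ℝ) + 2) *
                  sol n k A b (μ + Pi.single i 2) (l - 1)) := by
              split
              · rfl
              · exact Finset.sum_congr rfl fun i _ => by rw [ih (l-1) (by omega)]
            rw [e3] at e1
            have e4 := sub_eq_zero.mpr (e1.trans e2.symm)
            have hd := denom_ne l (μ (Fin.last n))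
            have : ((l : ℝ) + 1) * ((l : ℝ) + 2 + 2 * (μ (Fin.last n) : ℝ)) *
                (a μ (l + 1) - sol n k A b μ (l + 1)) = 0 := by
              linear_combination e4
            rcases mul_eq_zero.mp this with h' | h'
            · exact absurd h' hd
            · linarith [sub_eq_zero.mp h']
          · rw [hz μ (l+1) (by omega)]
            simp only [sol, solAux]
            rw [if_neg h]
    funext μ m
    exact key m μ
end
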